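/- arXiv:q-bio/0609027 — 6 statements merged into one kernel-verified Lean document; each statement's English description precedes it below -/
import Mathlib

section
/- For every real number b > 0, the section of the joint internal entropy production surface of the negative–negative interaction, h_b(x) = x(f(x) − g(b)) + b(f(b) − g(x)), attains its minimum over [0, ∞) at some point x_b lying strictly inside the interval (0, b); moreover any such minimizer satisfies the criticality equation f(x_b) − g(b) + x_b·f'(x_b) − b·g'(x_b) = 0. In particular the minimizing state satisfies x_b < b, i.e. system y is strictly ahead of system x with respect to thermodynamic equilibrium. -/
/-!
The section `h` has derivative `h' x = f x - g b + x f'(x) - b g'(x)`. At `0` this is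
`-g b - b g'(0) < 0`, while for `x ≥ b` it splits as
`(f x - g x) + (g x - g b) + x (f' - g')(x) + (x - b) g'(x)`, a sum of nonnegative terms whose
first is positive because `f - g` increases from `0`.
So `h` is nondecreasing on `[b, ∞)`, and its minimum over the compact `[0, b]`, which is then a
minimum over `[0, ∞)`, can lie at neither endpoint. An interior minimizer is a critical point.
-/

open Set Filter Topology

lemma HasDerivAt.nonneg_of_monotoneOn_Ici {φ : ℝ → ℝ} {x φ' : ℝ} (hd : HasDerivAt φ φ' x)
    (hφ : MonotoneOn φ (Ici x)) : 0 ≤ φ' :=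
  hd.hasDerivWithinAt.nonneg_of_monotoneOn
    (accPt_principal_iff_nhdsWithin.2 (nhdsGT_neBot x |>.mono
      (nhdsWithin_mono x fun _ (hy : x < _) => ⟨hy.le, hy.ne'⟩))) hφ

lemma IsMinOn.hasDerivAt_nonneg_of_left {h : ℝ → ℝ} {a b d : ℝ}
    (hmin : IsMinOn h (Icc a b) a) (hab : a < b) (hd : HasDerivAt h d a) : 0 ≤ d := by
  have hslope : Tendsto (slope h a) (𝓝[>] a) (𝓝 d) :=
    (hasDerivWithinAt_iff_tendsto_slope' (s := Ioi a) (lt_irrefl a)).1 hd.hasDerivWithinAt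
  refine ge_of_tendsto hslope ?_
  filter_upwards [Ioo_mem_nhdsGT hab] with y hy
  rw [slope_def_field]
  exact div_nonneg (sub_nonneg.2 (hmin ⟨hy.1.le, hy.2.le⟩)) (sub_nonneg.2 hy.1.le)

lemma IsMinOn.hasDerivAt_nonpos_of_right {h : ℝ → ℝ} {a b d : ℝ}
    (hmin : IsMinOn h (Icc a b) b) (hab : a < b) (hd : HasDerivAt h d b) : d ≤ 0 := by
  have hslope : Tendsto (slope h b) (𝓝[<] b) (𝓝 d) :=
    (hasDerivWithinAt_iff_tendsto_slope' (s := Iio b) (lt_irrefl b)).1 hd.hasDerivWithinAt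
  refine le_of_tendsto hslope ?_
  filter_upwards [Ioo_mem_nhdsLT hab] with y hy
  rw [slope_def_field]
  exact div_nonpos_of_nonneg_of_nonpos (sub_nonneg.2 (hmin ⟨hy.1.le, hy.2.le⟩))
    (sub_nonpos.2 hy.2.le)

lemma exists_mem_Ioo_isMinOn_Icc_of_deriv_neg_of_deriv_pos {h : ℝ → ℝ} {a b da db : ℝ}
    (hab : a < b) (hcont : ContinuousOn h (Icc a b))
    (ha : HasDerivAt h da a) (hda : da < 0) (hb : HasDerivAt h db b) (hdb : 0 < db) :
    ∃ c ∈ Ioo a b, IsMinOn h (Icc a b) c := by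
  obtain ⟨c, ⟨hac, hcb⟩, hmin⟩ :=
    isCompact_Icc.exists_isMinOn (nonempty_Icc.2 hab.le) hcont
  refine ⟨c, ⟨hac.lt_of_ne ?_, hcb.lt_of_ne ?_⟩, hmin⟩
  · rintro rfl
    exact hda.not_ge (hmin.hasDerivAt_nonneg_of_left hab ha)
  · rintro rfl
    exact hdb.not_ge (hmin.hasDerivAt_nonpos_of_right hab hb)

lemma IsMinOn.Ici_of_monotoneOn_Ici {h : ℝ → ℝ} {a b c : ℝ} (hmin : IsMinOn h (Icc a b) c)
    (hab : a ≤ b) (hmono : MonotoneOn h (Ici b)) : IsMinOn h (Ici a) c := by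
  intro x (hx : a ≤ x)
  rcases le_total x b with hxb | hbx
  · exact hmin ⟨hx, hxb⟩
  · exact (hmin ⟨hab, le_rfl⟩).trans (hmono self_mem_Ici hbx hbx)

def entropySection (f g : ℝ → ℝ) (b x : ℝ) : ℝ := x * (f x - g b) + b * (f b - g x)

section entropySection

variable {f g : ℝ → ℝ} {b x : ℝ}

lemma hasDerivAt_entropySection (hf : DifferentiableAt ℝ f x) (hg : DifferentiableAt ℝ g x) :
    HasDerivAt (entropySection f g b) (f x - g b + x * deriv f x - b * deriv g x) x := by
  have hprod := (hasDerivAt_id' x).mul (hf.hasDerivAt.sub_const (g b))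
  have hlin := (hg.hasDerivAt.const_sub (f b)).const_mul b
  exact (hprod.add hlin).congr_deriv (by ring)

lemma deriv_entropySection_zero_neg (hg : DifferentiableAt ℝ g 0) (hf0 : f 0 = 0)
    (hg0 : g 0 = 0) (hgm : StrictMonoOn g (Ici 0)) (hb : 0 < b) :
    f 0 - g b + 0 * deriv f 0 - b * deriv g 0 < 0 := by
  have hgb : 0 < g b := hg0 ▸ hgm self_mem_Ici hb.le hb
  have hg' : 0 ≤ deriv g 0 := hg.hasDerivAt.nonneg_of_monotoneOn_Ici hgm.monotoneOn
  nlinarith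

lemma deriv_entropySection_pos_of_le (hf : DifferentiableAt ℝ f x) (hg : DifferentiableAt ℝ g x)
    (hf0 : f 0 = 0) (hg0 : g 0 = 0) (hgm : StrictMonoOn g (Ici 0))
    (hfgm : StrictMonoOn (fun x => f x - g x) (Ici 0)) (hb : 0 < b) (hbx : b ≤ x) :
    0 < f x - g b + x * deriv f x - b * deriv g x := by
  have hx : 0 ≤ x := hb.le.trans hbx
  have hgap : 0 < f b - g b := by simpa [hf0, hg0] using hfgm self_mem_Ici hb.le hb
  have hgap_mono : f b - g b ≤ f x - g x := hfgm.monotoneOn hb.le hx hbx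
  have hgbx : g b ≤ g x := hgm.monotoneOn hb.le hx hbx
  have hg' : 0 ≤ deriv g x :=
    hg.hasDerivAt.nonneg_of_monotoneOn_Ici (hgm.monotoneOn.mono (Ici_subset_Ici.2 hx))
  have hfg' : 0 ≤ deriv f x - deriv g x :=
    (hf.hasDerivAt.sub hg.hasDerivAt).nonneg_of_monotoneOn_Ici
      (hfgm.monotoneOn.mono (Ici_subset_Ici.2 hx))
  nlinarith [mul_nonneg hx hfg', mul_nonneg (sub_nonneg.2 hbx) hg']

theorem exists_mem_Ioo_isMinOn_entropySection (hf : Differentiable ℝ f)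
    (hg : Differentiable ℝ g) (hf0 : f 0 = 0) (hg0 : g 0 = 0) (hgm : StrictMonoOn g (Ici 0))
    (hfgm : StrictMonoOn (fun x => f x - g x) (Ici 0)) (hb : 0 < b) :
    ∃ c ∈ Ioo 0 b, IsMinOn (entropySection f g b) (Ici 0) c := by
  have hderiv : ∀ x, HasDerivAt (entropySection f g b) _ x :=
    fun x => hasDerivAt_entropySection (hf x) (hg x)
  have hcont : Continuous (entropySection f g b) :=
    continuous_iff_continuousAt.2 fun x => (hderiv x).continuousAt
  have hmono : MonotoneOn (entropySection f g b) (Ici b) :=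
    monotoneOn_of_hasDerivWithinAt_nonneg (convex_Ici b) hcont.continuousOn
      (fun x _ => (hderiv x).hasDerivWithinAt) fun x hx =>
        (deriv_entropySection_pos_of_le (hf x) (hg x) hf0 hg0 hgm hfgm hb
          (interior_subset hx)).le
  obtain ⟨c, hc, hmin⟩ := exists_mem_Ioo_isMinOn_Icc_of_deriv_neg_of_deriv_pos hb
    hcont.continuousOn (hderiv 0) (deriv_entropySection_zero_neg (hg 0) hf0 hg0 hgm hb)
    (hderiv b) (deriv_entropySection_pos_of_le (hf b) (hg b) hf0 hg0 hgm hfgm hb le_rfl)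
  exact ⟨c, hc, hmin.Ici_of_monotoneOn_Ici hb.le hmono⟩

end entropySection

theorem nn_section_parallel_SX_min_general (f g : ℝ → ℝ)
    (hf : ContDiff ℝ 2 f) (hg : ContDiff ℝ 2 g)
    (hf0 : f 0 = 0) (hg0 : g 0 = 0)
    (hgmono : StrictMonoOn g (Set.Ici 0))
    (hfg : StrictMonoOn (fun x => f x - g x) (Set.Ici 0))
    (b : ℝ) (hb : 0 < b) :
    (∃ xb ∈ Set.Ioo 0 b,
        IsMinOn (fun x => x * (f x - g b) + b * (f b - g x)) (Set.Ici 0) xb) ∧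
      ∀ xb ∈ Set.Ioo 0 b,
        IsMinOn (fun x => x * (f x - g b) + b * (f b - g x)) (Set.Ici 0) xb →
          f xb - g b + xb * deriv f xb - b * deriv g xb = 0 := by
  have hfd : Differentiable ℝ f := hf.differentiable two_ne_zero
  have hgd : Differentiable ℝ g := hg.differentiable two_ne_zero
  refine ⟨exists_mem_Ioo_isMinOn_entropySection hfd hgd hf0 hg0 hgmono hfg hb,
    fun xb hxb hmin => ?_⟩
  exact (hmin.isLocalMin (Ici_mem_nhds hxb.1)).hasDerivAt_eq_zero
    (hasDerivAt_entropySection (hfd xb) (hgd xb))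

theorem nn_section_parallel_SX_min (f g : ℝ → ℝ)
    (hf : ContDiff ℝ 2 f) (hg : ContDiff ℝ 2 g)
    (hf0 : f 0 = 0) (hg0 : g 0 = 0)
    (hfmono : StrictMonoOn f (Set.Ici 0)) (hgmono : StrictMonoOn g (Set.Ici 0))
    (hfg : StrictMonoOn (fun x => f x - g x) (Set.Ici 0))
    (hfg' : MonotoneOn (fun x => deriv f x - deriv g x) (Set.Ici 0))
    (b : ℝ) (hb : 0 < b) :
    (∃ xb ∈ Set.Ioo 0 b,
        IsMinOn (fun x => x * (f x - g b) + b * (f b - g x)) (Set.Ici 0) xb) ∧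
      ∀ xb ∈ Set.Ioo 0 b,
        IsMinOn (fun x => x * (f x - g b) + b * (f b - g x)) (Set.Ici 0) xb →
          f xb - g b + xb * deriv f xb - b * deriv g xb = 0 :=
  nn_section_parallel_SX_min_general f g hf hg hf0 hg0 hgmono hfg b hb
end

section
/- St. Matthew inequality for the first trajectory of minimum entropy of the negative–negative interaction: if x ≥ 0 and y > 0 satisfy the trajectory equation f(x) − g(y) + x·f'(x) − y·g'(x) = 0, then 0 < x < y; that is, along the trajectory T₁ system y is always strictly ahead of system x with respect to thermodynamic equilibrium. -/
/-! If `x = 0` the trajectory equation reads `-g y - y g'(0) = 0`, impossible since `g y > 0`.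
If `y ≤ x`, then `f x - g y ≥ f x - g x > 0` and `x f'(x) - y g'(x) ≥ x (f' - g')(x) ≥ 0`,
so the left-hand side of the trajectory equation is positive. -/

open Set

lemma MonotoneOn.deriv_nonneg_of_le {g : ℝ → ℝ} {a x : ℝ} (hg : MonotoneOn g (Ici a))
    (hx : a ≤ x) : 0 ≤ deriv g x := by
  by_cases hd : DifferentiableAt ℝ g x
  · rw [← hd.derivWithin (uniqueDiffWithinAt_Ici x)]
    exact (hg.mono (Ici_subset_Ici.2 hx)).derivWithin_nonneg
  · rw [deriv_zero_of_not_differentiableAt hd]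

theorem nn_T1_st_matthew_general (f g : ℝ → ℝ)
    (hf : ContDiff ℝ 2 f) (hg : ContDiff ℝ 2 g)
    (hf0 : f 0 = 0) (hg0 : g 0 = 0)
    (hgmono : StrictMonoOn g (Set.Ici 0))
    (hfg : StrictMonoOn (fun x => f x - g x) (Set.Ici 0))
    (x y : ℝ) (hx : 0 ≤ x) (hy : 0 < y)
    (htraj : f x - g y + x * deriv f x - y * deriv g x = 0) :
    0 < x ∧ x < y := by
  have hg'_nonneg : ∀ t, 0 ≤ t → 0 ≤ deriv g t := fun _ ↦ hgmono.monotoneOn.deriv_nonneg_of_le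
  have hg'_le_hf' : deriv g x ≤ deriv f x := by
    have := hfg.monotoneOn.deriv_nonneg_of_le hx
    rw [deriv_fun_sub (hf.differentiable two_ne_zero x) (hg.differentiable two_ne_zero x)] at this
    linarith
  have hx_pos : 0 < x := by
    rcases hx.eq_or_lt with rfl | hx_pos
    · have hgy : 0 < g y := by simpa [hg0] using hgmono self_mem_Ici hy.le hy
      nlinarith [hg'_nonneg 0 le_rfl]
    · exact hx_pos
  refine ⟨hx_pos, lt_of_not_ge fun hyx ↦ ?_⟩
  have hgy_le : g y ≤ g x := hgmono.monotoneOn hy.le hx hyx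
  have hfgx_pos : 0 < f x - g x := by simpa [hf0, hg0] using hfg self_mem_Ici hx hx_pos
  nlinarith [hg'_nonneg x hx]

theorem nn_T1_st_matthew (f g : ℝ → ℝ)
    (hf : ContDiff ℝ 2 f) (hg : ContDiff ℝ 2 g)
    (hf0 : f 0 = 0) (hg0 : g 0 = 0)
    (hfmono : StrictMonoOn f (Set.Ici 0)) (hgmono : StrictMonoOn g (Set.Ici 0))
    (hfg : StrictMonoOn (fun x => f x - g x) (Set.Ici 0))
    (hfg' : MonotoneOn (fun x => deriv f x - deriv g x) (Set.Ici 0))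
    (x y : ℝ) (hx : 0 ≤ x) (hy : 0 < y)
    (htraj : f x - g y + x * deriv f x - y * deriv g x = 0) :
    0 < x ∧ x < y :=
  nn_T1_st_matthew_general f g hf hg hf0 hg0 hgmono hfg x y hx hy htraj
end

section
/- St. Matthew inequality for the second trajectory of minimum entropy of the negative–negative interaction: if y ≥ 0 and x > 0 satisfy the trajectory equation f(y) − g(x) + y·f'(y) − x·g'(y) = 0, then 0 < y < x; that is, along the trajectory T₂ system x is always strictly ahead of system y with respect to thermodynamic equilibrium. -/
/-!
At `y = 0` the trajectory equation reads `g x + x g'(0) = 0`, impossible for `x > 0` since `g`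
is increasing from `g 0 = 0`. If instead `0 < y` and `x ≤ y`, monotonicity of `g` gives
`g x + x g'(y) ≤ g y + y g'(y)`, so the left side of the equation is at least
`(f - g)(y) + y (f - g)'(y) > 0`, because `f - g` is increasing from `0`.
-/

open Set

lemma MonotoneOn.deriv_nonneg_of_Ici {g : ℝ → ℝ} {a t : ℝ} (hg : MonotoneOn g (Ici a))
    (hd : DifferentiableAt ℝ g t) (ht : a ≤ t) : 0 ≤ deriv g t := by
  rw [← hd.derivWithin (uniqueDiffOn_Ici t t self_mem_Ici)]
  exact (hg.mono (Ici_subset_Ici.2 ht)).derivWithin_nonneg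

section Trajectory

variable {f g : ℝ → ℝ} {x y : ℝ}

lemma pos_of_nn_T2 (hg : DifferentiableAt ℝ g 0) (hf0 : f 0 = 0) (hg0 : g 0 = 0)
    (hgmono : StrictMonoOn g (Ici 0)) (hy : 0 ≤ y) (hx : 0 < x)
    (htraj : f y - g x + y * deriv f y - x * deriv g y = 0) : 0 < y := by
  refine hy.lt_of_ne fun hy0 => ?_
  subst hy0
  have hgx : 0 < g x := hg0 ▸ hgmono self_mem_Ici hx.le hx
  have hdg0 : 0 ≤ deriv g 0 := hgmono.monotoneOn.deriv_nonneg_of_Ici hg le_rfl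
  nlinarith

lemma lt_of_nn_T2 (hf : DifferentiableAt ℝ f y) (hg : DifferentiableAt ℝ g y)
    (hf0 : f 0 = 0) (hg0 : g 0 = 0) (hgmono : MonotoneOn g (Ici 0))
    (hfg : StrictMonoOn (fun x => f x - g x) (Ici 0)) (hy : 0 < y) (hx : 0 ≤ x)
    (htraj : f y - g x + y * deriv f y - x * deriv g y = 0) : y < x := by
  by_contra! hxy
  have hgxy : g x ≤ g y := hgmono hx (hx.trans hxy) hxy
  have hdg : 0 ≤ deriv g y := hgmono.deriv_nonneg_of_Ici hg hy.le
  have hfg_pos : 0 < f y - g y := by simpa [hf0, hg0] using hfg self_mem_Ici hy.le hy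
  have hdfg : 0 ≤ deriv f y - deriv g y := by
    rw [← deriv_sub hf hg]
    exact hfg.monotoneOn.deriv_nonneg_of_Ici (hf.sub hg) hy.le
  nlinarith [mul_le_mul_of_nonneg_right hxy hdg, mul_nonneg hy.le hdfg]

end Trajectory

theorem nn_T2_st_matthew_general (f g : ℝ → ℝ)
    (hf : ContDiff ℝ 2 f) (hg : ContDiff ℝ 2 g)
    (hf0 : f 0 = 0) (hg0 : g 0 = 0)
    (hgmono : StrictMonoOn g (Set.Ici 0))
    (hfg : StrictMonoOn (fun x => f x - g x) (Set.Ici 0))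
    (x y : ℝ) (hy : 0 ≤ y) (hx : 0 < x)
    (htraj : f y - g x + y * deriv f y - x * deriv g y = 0) :
    0 < y ∧ y < x := by
  have hfd : Differentiable ℝ f := hf.differentiable two_ne_zero
  have hgd : Differentiable ℝ g := hg.differentiable two_ne_zero
  have hy_pos : 0 < y := pos_of_nn_T2 (hgd 0) hf0 hg0 hgmono hy hx htraj
  exact ⟨hy_pos, lt_of_nn_T2 (hfd y) (hgd y) hf0 hg0 hgmono.monotoneOn hfg hy_pos hx.le htraj⟩

theorem nn_T2_st_matthew (f g : ℝ → ℝ)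
    (hf : ContDiff ℝ 2 f) (hg : ContDiff ℝ 2 g)
    (hf0 : f 0 = 0) (hg0 : g 0 = 0)
    (hfmono : StrictMonoOn f (Set.Ici 0)) (hgmono : StrictMonoOn g (Set.Ici 0))
    (hfg : StrictMonoOn (fun x => f x - g x) (Set.Ici 0))
    (hfg' : MonotoneOn (fun x => deriv f x - deriv g x) (Set.Ici 0))
    (x y : ℝ) (hy : 0 ≤ y) (hx : 0 < x)
    (htraj : f y - g x + y * deriv f y - x * deriv g y = 0) :
    0 < y ∧ y < x :=
  nn_T2_st_matthew_general f g hf hg hf0 hg0 hgmono hfg x y hy hx htraj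
end

section
/- The bisector y = x is a trajectory of minimum entropy of the negative–negative interaction: for every c > 0, if f'(c/2) + g'(c/2) > 0, then x = c/2 is a strict local minimum of the section h(x) = x(f(x) − g(c − x)) + (c − x)(f(c − x) − g(x)) of the joint internal entropy production surface by the plane y = c − x. -/
/-!
With `F = f - g`, the entropy production splits as
`Ṡ(x, y) = x F(x) + y F(y) + (x - y) (g(x) - g(y))`.
The last term is positive off the diagonal because `g` is increasing. Since `F' = f' - g'` is
nondecreasing, `F` is convex, and being also nondecreasing, `x ↦ x F(x)` is convex on `[0, ∞)`;
so `x F(x) + y F(y)` is at least its value at the midpoint of `x` and `y`. Hence `c / 2` is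
the strict minimum of `h` on the whole interval `(0, c)`.
-/

open Set

/-- The joint internal entropy production `Ṡ(x, y)` of the negative–negative interaction. -/
def entropyProduction (f g : ℝ → ℝ) (x y : ℝ) : ℝ :=
  x * (f x - g y) + y * (f y - g x)

theorem entropyProduction_eq (f g : ℝ → ℝ) (x y : ℝ) :
    entropyProduction f g x y =
      x * (f x - g x) + y * (f y - g y) + (x - y) * (g x - g y) := by
  unfold entropyProduction
  ring

theorem convexOn_sub_of_monotoneOn_deriv_sub {s : Set ℝ} (hs : Convex ℝ s) {f g : ℝ → ℝ}
    (hf : Differentiable ℝ f) (hg : Differentiable ℝ g)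
    (hfg : MonotoneOn (fun x => deriv f x - deriv g x) s) :
    ConvexOn ℝ s (fun x => f x - g x) := by
  refine MonotoneOn.convexOn_of_deriv hs (hf.sub hg).continuous.continuousOn
    (hf.sub hg).differentiableOn fun a ha b hb hab => ?_
  rw [deriv_fun_sub (hf a) (hg a), deriv_fun_sub (hf b) (hg b)]
  exact hfg (interior_subset ha) (interior_subset hb) hab

/-- `x F(x) = x (F(x) - F(0)) + F(0) x`, where `F - F(0) ≥ 0` so that `ConvexOn.mul` applies. -/
theorem ConvexOn.id_mul_of_monotoneOn {F : ℝ → ℝ} (hF : ConvexOn ℝ (Ici 0) F)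
    (hF' : MonotoneOn F (Ici 0)) : ConvexOn ℝ (Ici 0) fun x => x * F x := by
  have hshift : ConvexOn ℝ (Ici 0) fun x => x * (F x - F 0) :=
    (convexOn_id (convex_Ici 0)).mul
      (hF.add_const (-F 0) |>.congr fun x _ => by simp [sub_eq_add_neg])
      (fun x hx => hx) (fun x hx => sub_nonneg.2 (hF' self_mem_Ici hx hx))
      (monotoneOn_id.monovaryOn fun x hx y hy hxy => sub_le_sub_right (hF' hx hy hxy) _)
  have hlin : ConvexOn ℝ (Ici 0) fun x => x * F 0 :=
    (LinearMap.mulRight ℝ (F 0)).convexOn (convex_Ici 0)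
  exact (hshift.add hlin).congr fun x _ => by simp only [Pi.add_apply]; ring

theorem StrictMonoOn.sub_mul_sub_pos {s : Set ℝ} {g : ℝ → ℝ} (hg : StrictMonoOn g s)
    {x y : ℝ} (hx : x ∈ s) (hy : y ∈ s) (hxy : x ≠ y) : 0 < (x - y) * (g x - g y) := by
  rcases hxy.lt_or_gt with h | h
  · exact mul_pos_of_neg_of_neg (sub_neg.2 h) (sub_neg.2 (hg hx hy h))
  · exact mul_pos (sub_pos.2 h) (sub_pos.2 (hg hy hx h))

theorem entropyProduction_midpoint_lt {f g : ℝ → ℝ}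
    (hF : ConvexOn ℝ (Ici 0) fun x => f x - g x) (hF' : MonotoneOn (fun x => f x - g x) (Ici 0))
    (hg : StrictMonoOn g (Ici 0)) {x y : ℝ} (hx : 0 ≤ x) (hy : 0 ≤ y) (hxy : x ≠ y) :
    entropyProduction f g ((x + y) / 2) ((x + y) / 2) < entropyProduction f g x y := by
  have hmid := (hF.id_mul_of_monotoneOn hF').2 hx hy (by norm_num : (0 : ℝ) ≤ 1 / 2)
    (by norm_num : (0 : ℝ) ≤ 1 / 2) (by norm_num)
  simp only [smul_eq_mul, show 1 / 2 * x + 1 / 2 * y = (x + y) / 2 by ring] at hmid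
  have hcross := hg.sub_mul_sub_pos hx hy hxy
  rw [entropyProduction_eq, entropyProduction_eq, sub_self, zero_mul, add_zero]
  linarith

theorem nn_bisector_is_tme_general (f g : ℝ → ℝ)
    (hf : ContDiff ℝ 2 f) (hg : ContDiff ℝ 2 g)
    (hgmono : StrictMonoOn g (Set.Ici 0))
    (hfg : StrictMonoOn (fun x => f x - g x) (Set.Ici 0))
    (hfg' : MonotoneOn (fun x => deriv f x - deriv g x) (Set.Ici 0))
    (c : ℝ) (hc : 0 < c) :
    ∃ ε > 0, ∀ x : ℝ, |x - c / 2| < ε → x ≠ c / 2 →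
      (fun x => x * (f x - g (c - x)) + (c - x) * (f (c - x) - g x)) (c / 2) <
        (fun x => x * (f x - g (c - x)) + (c - x) * (f (c - x) - g x)) x := by
  have hconv := convexOn_sub_of_monotoneOn_deriv_sub (convex_Ici 0)
    (hf.differentiable two_ne_zero) (hg.differentiable two_ne_zero) hfg'
  refine ⟨c / 2, half_pos hc, fun x hx hne => ?_⟩
  obtain ⟨hx₀, hxc⟩ : 0 < x ∧ x < c := by constructor <;> linarith [abs_lt.1 hx]
  have key := entropyProduction_midpoint_lt hconv hfg.monotoneOn hgmono hx₀.le
    (sub_nonneg.2 hxc.le) (by contrapose! hne; linarith)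
  rw [show (x + (c - x)) / 2 = c / 2 by ring] at key
  show entropyProduction f g (c / 2) (c - c / 2) < entropyProduction f g x (c - x)
  rwa [sub_half]

theorem nn_bisector_is_tme (f g : ℝ → ℝ)
    (hf : ContDiff ℝ 2 f) (hg : ContDiff ℝ 2 g)
    (hf0 : f 0 = 0) (hg0 : g 0 = 0)
    (hfmono : StrictMonoOn f (Set.Ici 0)) (hgmono : StrictMonoOn g (Set.Ici 0))
    (hfg : StrictMonoOn (fun x => f x - g x) (Set.Ici 0))
    (hfg' : MonotoneOn (fun x => deriv f x - deriv g x) (Set.Ici 0))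
    (c : ℝ) (hc : 0 < c)
    (hpos : 0 < deriv f (c / 2) + deriv g (c / 2)) :
    ∃ ε > 0, ∀ x : ℝ, |x - c / 2| < ε → x ≠ c / 2 →
      (fun x => x * (f x - g (c - x)) + (c - x) * (f (c - x) - g x)) (c / 2) <
        (fun x => x * (f x - g (c - x)) + (c - x) * (f (c - x) - g x)) x :=
  nn_bisector_is_tme_general f g hf hg hgmono hfg hfg' c hc
end

section
/- St. Matthew inequality for the trajectory T₁ of the positive–negative interaction: if x ≥ 0 and y > 0 satisfy the trajectory equation f(x) + g(y) + x·f'(x) − y·g'(x) = 0, then x < y; that is, along this trajectory of minimum entropy system y is always strictly ahead of system x with respect to thermodynamic equilibrium. -/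
/-!
Suppose `y ≤ x`. On `[0, ∞)` we have `0 ≤ g ≤ f`, and at the interior point `x` the monotonicity
of `g` and `f - g` gives `0 ≤ g' x ≤ f' x`. Hence
`f x + g y + x f' x - y g' x ≥ g y + (x - y) g' x ≥ g y > 0`,
so `(x, y)` cannot lie on the trajectory.
-/

open Set Topology

section

variable {𝕜 : Type*} [NontriviallyNormedField 𝕜] [LinearOrder 𝕜] [IsStrictOrderedRing 𝕜]
  [OrderTopology 𝕜] {g : 𝕜 → 𝕜} {s : Set 𝕜} {x : 𝕜}

lemma MonotoneOn.deriv_nonneg_of_mem_nhds (hg : MonotoneOn g s) (hs : s ∈ 𝓝 x) :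
    0 ≤ deriv g x := by
  rw [← derivWithin_of_mem_nhds hs]
  exact hg.derivWithin_nonneg

lemma deriv_le_deriv_of_monotoneOn_sub {f : 𝕜 → 𝕜} (hf : DifferentiableAt 𝕜 f x)
    (hg : DifferentiableAt 𝕜 g x) (hfg : MonotoneOn (fun t => f t - g t) s) (hs : s ∈ 𝓝 x) :
    deriv g x ≤ deriv f x := by
  have h := hfg.deriv_nonneg_of_mem_nhds hs
  rw [deriv_fun_sub hf hg] at h
  exact sub_nonneg.mp h

end

theorem pn_T1_st_matthew_general (f g : ℝ → ℝ)
    (hf : ContDiff ℝ 2 f) (hg : ContDiff ℝ 2 g)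
    (hf0 : f 0 = 0) (hg0 : g 0 = 0)
    (hgmono : StrictMonoOn g (Set.Ici 0))
    (hfg : StrictMonoOn (fun x => f x - g x) (Set.Ici 0))
    (x y : ℝ) (hx : 0 ≤ x) (hy : 0 < y)
    (htraj : f x + g y + x * deriv f x - y * deriv g x = 0) :
    x < y := by
  by_contra! hyx
  have hnhds : Ici (0 : ℝ) ∈ 𝓝 x := Ici_mem_nhds (hy.trans_le hyx)
  have hgy : 0 < g y := hg0 ▸ hgmono self_mem_Ici hy.le hy
  have hgx : 0 ≤ g x := hg0 ▸ hgmono.monotoneOn self_mem_Ici hx hx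
  have hgfx : g x ≤ f x := by
    have := hfg.monotoneOn self_mem_Ici hx hx
    simp only [hf0, hg0, sub_zero] at this
    linarith
  have hg'x : 0 ≤ deriv g x := hgmono.monotoneOn.deriv_nonneg_of_mem_nhds hnhds
  have hgf'x : deriv g x ≤ deriv f x :=
    deriv_le_deriv_of_monotoneOn_sub (hf.differentiable two_ne_zero x)
      (hg.differentiable two_ne_zero x) hfg.monotoneOn hnhds
  nlinarith [mul_le_mul_of_nonneg_left hgf'x hx, mul_le_mul_of_nonneg_right hyx hg'x]

theorem pn_T1_st_matthew (f g : ℝ → ℝ)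
    (hf : ContDiff ℝ 2 f) (hg : ContDiff ℝ 2 g)
    (hf0 : f 0 = 0) (hg0 : g 0 = 0)
    (hfmono : StrictMonoOn f (Set.Ici 0)) (hgmono : StrictMonoOn g (Set.Ici 0))
    (hfg : StrictMonoOn (fun x => f x - g x) (Set.Ici 0))
    (hfg' : MonotoneOn (fun x => deriv f x - deriv g x) (Set.Ici 0))
    (x y : ℝ) (hx : 0 ≤ x) (hy : 0 < y)
    (htraj : f x + g y + x * deriv f x - y * deriv g x = 0) :
    x < y :=
  pn_T1_st_matthew_general f g hf hg hf0 hg0 hgmono hfg x y hx hy htraj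
end

section
/- For every real number c > 0, the second derivative at x = c/2 of the section h(x) = x(f(x) + g(c − x)) + (c − x)(f(c − x) − g(x)) of the positive–negative interaction surface by the plane y = c − x equals h''(c/2) = 4·f'(c/2) + c·f''(c/2); consequently, if g(c/2) = (c/2)·g'(c/2) and 4·f'(c/2) + c·f''(c/2) > 0, then x = c/2 is a strict local minimum of this section. -/
/-!
Write the section as `h(x) = φ(x) + φ(c - x) + ψ(x)` with `φ(x) = x f(x)` and
`ψ(x) = x g(c - x) - (c - x) g(x)`. The reflection `x ↦ c - x` fixes `c / 2`, leaves the first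
part invariant and negates `ψ`; hence `ψ''(c / 2) = 0` and
`h''(c / 2) = 2 φ''(c / 2) = 4 f'(c / 2) + c f''(c / 2)`, while
`h'(c / 2) = ψ'(c / 2) = 2 g(c / 2) - c g'(c / 2)`. Under the hypothesis on `g` the first
derivative vanishes, and a strict form of the second-derivative test gives the minimum.
-/

open Set Filter Topology

theorem lt_of_deriv_neg_of_deriv_pos {f : ℝ → ℝ} {a b x₀ x : ℝ}
    (hcont : ContinuousOn f (Ioo a b)) (hneg : ∀ y ∈ Ioo a x₀, deriv f y < 0)
    (hpos : ∀ y ∈ Ioo x₀ b, 0 < deriv f y) (hx₀ : x₀ ∈ Ioo a b) (hx : x ∈ Ioo a b)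
    (hne : x ≠ x₀) : f x₀ < f x := by
  rcases hne.lt_or_gt with hlt | hgt
  · have hanti : StrictAntiOn f (Icc x x₀) :=
      strictAntiOn_of_deriv_neg (convex_Icc _ _) (hcont.mono (Icc_subset_Ioo hx.1 hx₀.2))
        fun y hy => by rw [interior_Icc] at hy; exact hneg y ⟨hx.1.trans hy.1, hy.2⟩
    exact hanti (left_mem_Icc.2 hlt.le) (right_mem_Icc.2 hlt.le) hlt
  · have hmono : StrictMonoOn f (Icc x₀ x) :=
      strictMonoOn_of_deriv_pos (convex_Icc _ _) (hcont.mono (Icc_subset_Ioo hx₀.1 hx.2))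
        fun y hy => by rw [interior_Icc] at hy; exact hpos y ⟨hy.1, hy.2.trans hx.2⟩
    exact hmono (left_mem_Icc.2 hgt.le) (right_mem_Icc.2 hgt.le) hgt

theorem eventually_nhdsNE_lt_of_deriv_deriv_pos {f : ℝ → ℝ} {x₀ : ℝ}
    (hf : 0 < deriv (deriv f) x₀) (hd : deriv f x₀ = 0) (hc : ContinuousAt f x₀) :
    ∀ᶠ x in 𝓝[≠] x₀, f x₀ < f x := by
  obtain ⟨ε, hε, hsign⟩ := Metric.eventually_nhds_iff_ball.mp
    (eventually_nhdsWithin_sign_eq_of_deriv_pos hf hd)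
  rw [Real.ball_eq_Ioo] at hsign
  have hcont : ContinuousOn f (Ioo (x₀ - ε) (x₀ + ε)) := by
    intro y hy
    rcases eq_or_ne y x₀ with rfl | hne
    · exact hc.continuousWithinAt
    · have hy0 : deriv f y ≠ 0 := fun h0 => hne <| sub_eq_zero.mp <|
        sign_eq_zero_iff.mp <| by rw [← hsign y hy, h0, sign_zero]
      exact (differentiableAt_of_deriv_ne_zero hy0).continuousAt.continuousWithinAt
  have hneg : ∀ y ∈ Ioo (x₀ - ε) x₀, deriv f y < 0 := fun y hy =>
    sign_eq_neg_one_iff.mp <| (hsign y ⟨hy.1, by linarith [hy.2]⟩).trans <|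
      sign_eq_neg_one_iff.mpr (sub_neg.mpr hy.2)
  have hpos : ∀ y ∈ Ioo x₀ (x₀ + ε), 0 < deriv f y := fun y hy =>
    sign_eq_one_iff.mp <| (hsign y ⟨by linarith [hy.1], hy.2⟩).trans <|
      sign_eq_one_iff.mpr (sub_pos.mpr hy.1)
  have hx₀ : x₀ ∈ Ioo (x₀ - ε) (x₀ + ε) := ⟨by linarith, by linarith⟩
  filter_upwards [nhdsWithin_le_nhds (Ioo_mem_nhds hx₀.1 hx₀.2), self_mem_nhdsWithin]
    with x hx hne
  exact lt_of_deriv_neg_of_deriv_pos hcont hneg hpos hx₀ hx hne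

section Reflection

variable {u : ℝ → ℝ} {c : ℝ}

theorem deriv_half_eq_zero_of_symm (hu : ∀ x, u (c - x) = u x) : deriv u (c / 2) = 0 := by
  have h := deriv_comp_const_sub (f := u) (a := c) (x := c / 2)
  simp only [hu, show c - c / 2 = c / 2 by ring] at h
  linarith

theorem deriv_symm_of_antisymm (hu : ∀ x, u (c - x) = -u x) (x : ℝ) :
    deriv u (c - x) = deriv u x := by
  have h := deriv_comp_const_sub (f := u) (a := c) (x := x)
  simp only [hu, deriv.fun_neg] at h
  linarith

theorem deriv_deriv_half_eq_zero_of_antisymm (hu : ∀ x, u (c - x) = -u x) :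
    deriv (deriv u) (c / 2) = 0 :=
  deriv_half_eq_zero_of_symm (deriv_symm_of_antisymm hu)

theorem deriv_deriv_comp_const_sub (u : ℝ → ℝ) (c x : ℝ) :
    deriv (deriv fun y => u (c - y)) x = deriv (deriv u) (c - x) := by
  have h : deriv (fun y => u (c - y)) = fun y => -deriv u (c - y) :=
    funext fun y => deriv_comp_const_sub u c y
  rw [h, deriv.fun_neg, deriv_comp_const_sub, neg_neg]

end Reflection

section SecondDeriv

variable {u v : ℝ → ℝ}

theorem ContDiff.differentiable_deriv (hu : ContDiff ℝ 2 u) : Differentiable ℝ (deriv u) :=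
  (hu.deriv' (n := 1)).differentiable one_ne_zero

theorem ContDiff.deriv_deriv_add (hu : ContDiff ℝ 2 u) (hv : ContDiff ℝ 2 v) (x : ℝ) :
    deriv (deriv fun y => u y + v y) x = deriv (deriv u) x + deriv (deriv v) x := by
  have h : deriv (fun y => u y + v y) = fun y => deriv u y + deriv v y :=
    funext fun y =>
      deriv_fun_add (hu.differentiable two_ne_zero y) (hv.differentiable two_ne_zero y)
  rw [h, deriv_fun_add (hu.differentiable_deriv x) (hv.differentiable_deriv x)]

theorem ContDiff.deriv_deriv_id_mul (hu : ContDiff ℝ 2 u) (x : ℝ) :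
    deriv (deriv fun y => y * u y) x = 2 * deriv u x + x * deriv (deriv u) x := by
  have h : deriv (fun y => y * u y) = fun y => u y + y * deriv u y := funext fun y => by
    simpa using ((hasDerivAt_id' y).fun_mul (hu.differentiable two_ne_zero y).hasDerivAt).deriv
  rw [h, ((hu.differentiable two_ne_zero x).hasDerivAt.fun_add
    ((hasDerivAt_id' x).fun_mul (hu.differentiable_deriv x).hasDerivAt)).deriv]
  ring

end SecondDeriv

/-- The section `h` of `Ṡ(x, y)` by the plane `y = c - x`. -/
def pnSection (f g : ℝ → ℝ) (c x : ℝ) : ℝ :=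
  x * (f x + g (c - x)) + (c - x) * (f (c - x) - g x)

section PnSection

variable {f g : ℝ → ℝ}

theorem pnSection_eq (f g : ℝ → ℝ) (c : ℝ) :
    pnSection f g c = fun x =>
      (x * f x + (c - x) * f (c - x)) + (x * g (c - x) - (c - x) * g x) :=
  funext fun x => by unfold pnSection; ring

theorem deriv_pnSection_half (hf : Differentiable ℝ f) (hg : Differentiable ℝ g) (c : ℝ) :
    deriv (pnSection f g c) (c / 2) = 2 * g (c / 2) - c * deriv g (c / 2) := by
  have hψ : HasDerivAt (fun x => x * g (c - x) - (c - x) * g x)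
      (2 * g (c / 2) - c * deriv g (c / 2)) (c / 2) := by
    have hr := (hg (c - c / 2)).hasDerivAt.comp_const_sub c (c / 2)
    refine (((hasDerivAt_id' (c / 2)).fun_mul hr).fun_sub
      (((hasDerivAt_id' (c / 2)).const_sub c).fun_mul (hg (c / 2)).hasDerivAt)).congr_deriv ?_
    rw [show c - c / 2 = c / 2 by ring]; ring
  rw [pnSection_eq, deriv_fun_add (by fun_prop) hψ.differentiableAt, hψ.deriv,
    deriv_half_eq_zero_of_symm (fun x => by rw [sub_sub_cancel]; ring), zero_add]

theorem deriv_deriv_pnSection_half (hf : ContDiff ℝ 2 f) (hg : ContDiff ℝ 2 g) (c : ℝ) :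
    deriv (deriv (pnSection f g c)) (c / 2) =
      4 * deriv f (c / 2) + c * deriv (deriv f) (c / 2) := by
  have hφ : ContDiff ℝ 2 fun y => y * f y := by fun_prop
  have hψ : deriv (deriv fun x => x * g (c - x) - (c - x) * g x) (c / 2) = 0 :=
    deriv_deriv_half_eq_zero_of_antisymm fun x => by rw [sub_sub_cancel]; ring
  rw [pnSection_eq, ContDiff.deriv_deriv_add (by fun_prop) (by fun_prop), hψ,
    ContDiff.deriv_deriv_add hφ (by fun_prop), deriv_deriv_comp_const_sub (fun y => y * f y),
    hf.deriv_deriv_id_mul, hf.deriv_deriv_id_mul, show c - c / 2 = c / 2 by ring]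
  ring

end PnSection

theorem pn_transversal_second_deriv_general (f g : ℝ → ℝ)
    (hf : ContDiff ℝ 2 f) (hg : ContDiff ℝ 2 g)
    (c : ℝ) :
    deriv (deriv (fun x => x * (f x + g (c - x)) + (c - x) * (f (c - x) - g x))) (c / 2) =
        4 * deriv f (c / 2) + c * deriv (deriv f) (c / 2) ∧
      (g (c / 2) = c / 2 * deriv g (c / 2) →
        0 < 4 * deriv f (c / 2) + c * deriv (deriv f) (c / 2) →
        ∃ ε > 0, ∀ x : ℝ, |x - c / 2| < ε → x ≠ c / 2 →
          (fun x => x * (f x + g (c - x)) + (c - x) * (f (c - x) - g x)) (c / 2) <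
            (fun x => x * (f x + g (c - x)) + (c - x) * (f (c - x) - g x)) x) := by
  have hsecond := deriv_deriv_pnSection_half hf hg c
  refine ⟨hsecond, fun hgc hpos => ?_⟩
  have hfirst : deriv (pnSection f g c) (c / 2) = 0 := by
    rw [deriv_pnSection_half (hf.differentiable two_ne_zero) (hg.differentiable two_ne_zero), hgc]
    ring
  have hcont : Continuous (pnSection f g c) := by unfold pnSection; fun_prop
  have hmin := eventually_nhdsNE_lt_of_deriv_deriv_pos (hsecond ▸ hpos) hfirst
    hcont.continuousAt
  obtain ⟨ε, hε, hball⟩ :=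
    Metric.eventually_nhds_iff_ball.mp (eventually_nhdsWithin_iff.mp hmin)
  exact ⟨ε, hε, fun x hx hne => hball x (by rwa [Metric.mem_ball, Real.dist_eq]) hne⟩

theorem pn_transversal_second_deriv (f g : ℝ → ℝ)
    (hf : ContDiff ℝ 2 f) (hg : ContDiff ℝ 2 g)
    (hf0 : f 0 = 0) (hg0 : g 0 = 0)
    (hfmono : StrictMonoOn f (Set.Ici 0)) (hgmono : StrictMonoOn g (Set.Ici 0))
    (hfg : StrictMonoOn (fun x => f x - g x) (Set.Ici 0))
    (hfg' : MonotoneOn (fun x => deriv f x - deriv g x) (Set.Ici 0))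
    (c : ℝ) (hc : 0 < c) :
    deriv (deriv (fun x => x * (f x + g (c - x)) + (c - x) * (f (c - x) - g x))) (c / 2) =
        4 * deriv f (c / 2) + c * deriv (deriv f) (c / 2) ∧
      (g (c / 2) = c / 2 * deriv g (c / 2) →
        0 < 4 * deriv f (c / 2) + c * deriv (deriv f) (c / 2) →
        ∃ ε > 0, ∀ x : ℝ, |x - c / 2| < ε → x ≠ c / 2 →
          (fun x => x * (f x + g (c - x)) + (c - x) * (f (c - x) - g x)) (c / 2) <
            (fun x => x * (f x + g (c - x)) + (c - x) * (f (c - x) - g x)) x) :=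
  pn_transversal_second_deriv_general f g hf hg c
end
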